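/- Let m be a positive integer and r an integer. For τ ∈ ℍ define the weight 3/2 unary theta function θ¹_{m,r}(τ) = Σ_{ℓ ∈ ℤ, ℓ ≡ r (mod 2m)} ℓ · e^{2πi τ ℓ²/(4m)} and the false theta function Ψ_{m,r}(τ) = Σ_{ℓ ∈ ℤ, ℓ ≡ r (mod 2m)} sgn(ℓ) · e^{2πi τ ℓ²/(4m)}. Then for every τ ∈ ℍ, ∫_0^∞ θ¹_{m,r}(τ + i s) · s^{−1/2} ds = √(2m) · Ψ_{m,r}(τ), with the integral absolutely convergent. -/

import Mathlib

open Complex MeasureTheory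

/-- The weight 3/2 unary theta function
`θ¹_{m,r}(τ) = Σ_{ℓ ≡ r (2m)} ℓ q^{ℓ²/4m}`. -/
noncomputable def unaryTheta1 (m : ℕ) (r : ℤ) (τ : ℂ) : ℂ :=
  ∑' ℓ : ℤ, if (ℓ : ZMod (2 * m)) = (r : ZMod (2 * m)) then
      (ℓ : ℂ) * Complex.exp (2 * Real.pi * Complex.I * τ * (ℓ : ℂ) ^ 2 / (4 * m))
    else 0

/-- The false theta function `Ψ_{m,r}(τ) = Σ_{ℓ ≡ r (2m)} sgn(ℓ) q^{ℓ²/4m}`. -/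
noncomputable def falseTheta (m : ℕ) (r : ℤ) (τ : ℂ) : ℂ :=
  ∑' ℓ : ℤ, if (ℓ : ZMod (2 * m)) = (r : ZMod (2 * m)) then
      (Int.sign ℓ : ℂ) * Complex.exp (2 * Real.pi * Complex.I * τ * (ℓ : ℂ) ^ 2 / (4 * m))
    else 0

/-!
Along the vertical ray, `θ¹_{m,r}(τ + is) = Σ_ℓ a_ℓ e^{-π (ℓ/√(2m))² s}` where `a_ℓ` is the
`ℓ`-th term of `θ¹_{m,r}(τ)`, so the integral is the Mellin transform at `1/2` of a
Dirichlet-type series in `e^{-s}`. Integrating termwise with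
`∫₀^∞ e^{-π x² s} s^{-1/2} ds = 1/|x|` turns `a_ℓ = ℓ q^{ℓ²/4m}` into `√(2m) sgn(ℓ) q^{ℓ²/4m}`.
The exponents are at least `π/2m` wherever `a_ℓ ≠ 0` and `Σ |a_ℓ|` converges, so the integrand
is bounded near `0` and decays exponentially at `∞`.
-/

open Filter Set Asymptotics

lemma norm_mul_exp_neg_le {c : ℂ} {q q₀ t : ℝ} (h : c = 0 ∨ q₀ ≤ q) (ht : 0 ≤ t) :
    ‖c * (Real.exp (-q * t) : ℂ)‖ ≤ ‖c‖ * Real.exp (-q₀ * t) := by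
  rcases h with rfl | hq
  · simp
  rw [norm_mul, norm_real, Real.norm_of_nonneg (Real.exp_pos _).le]
  gcongr

theorem mellinConvergent_of_hasSum_mul_exp_neg {ι : Type*} [Countable ι] {a : ι → ℂ}
    {p : ι → ℝ} {p₀ : ℝ} {F : ℝ → ℂ} {s : ℂ} (hp₀ : 0 < p₀) (hp : ∀ i, a i = 0 ∨ p₀ ≤ p i)
    (ha : Summable (‖a ·‖))
    (hF : ∀ t ∈ Ioi 0, HasSum (fun i ↦ a i * (Real.exp (-p i * t) : ℂ)) (F t))
    (hs : 0 < s.re) : MellinConvergent F s := by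
  have hexp_le_one : ∀ t ∈ Ioi (0 : ℝ), Real.exp (-p₀ * t) ≤ 1 := fun t ht ↦
    Real.exp_le_one_iff.2 (mul_nonpos_of_nonpos_of_nonneg (neg_nonpos.2 hp₀.le) (le_of_lt ht))
  have hbound : ∀ t ∈ Ioi (0 : ℝ), ‖F t‖ ≤ (∑' i, ‖a i‖) * Real.exp (-p₀ * t) := by
    intro t ht
    rw [← (hF t ht).tsum_eq, ← ha.tsum_mul_right]
    exact tsum_of_norm_bounded (ha.mul_right _).hasSum
      fun i ↦ norm_mul_exp_neg_le (hp i) (le_of_lt ht)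
  have hcont : ContinuousOn F (Ioi 0) := by
    refine (continuousOn_tsum (fun i ↦ by fun_prop) ha fun i t ht ↦ ?_).congr
      fun t ht ↦ (hF t ht).tsum_eq.symm
    exact (norm_mul_exp_neg_le (hp i) (le_of_lt ht)).trans <|
      mul_le_of_le_one_right (norm_nonneg _) (hexp_le_one t ht)
  refine mellinConvergent_of_isBigO_rpow_exp hp₀ (hcont.locallyIntegrableOn measurableSet_Ioi)
    (.of_bound (∑' i, ‖a i‖) ?_) (.of_bound (∑' i, ‖a i‖) ?_) (b := 0) hs
  · filter_upwards [eventually_gt_atTop 0] with t ht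
    simpa [Real.norm_of_nonneg (Real.exp_pos _).le] using hbound t ht
  · filter_upwards [self_mem_nhdsWithin] with t ht
    simpa using (hbound t ht).trans
      (mul_le_of_le_one_right (tsum_nonneg fun _ ↦ norm_nonneg _) (hexp_le_one t ht))

lemma cpow_one_half_sub_one_smul {f : ℝ → ℂ} {t : ℝ} (ht : 0 < t) :
    (t : ℂ) ^ ((1 : ℂ) / 2 - 1) • f t = f t * ((t ^ (-(1 / 2) : ℝ) : ℝ) : ℂ) := by
  rw [smul_eq_mul, mul_comm, ofReal_cpow ht.le]
  norm_num

lemma mellinConvergent_one_half_iff {f : ℝ → ℂ} :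
    MellinConvergent f (1 / 2) ↔
      IntegrableOn (fun t : ℝ ↦ f t * ((t ^ (-(1 / 2) : ℝ) : ℝ) : ℂ)) (Ioi 0) :=
  integrableOn_congr_fun (fun _ ht ↦ cpow_one_half_sub_one_smul ht) measurableSet_Ioi

lemma mellin_one_half {f : ℝ → ℂ} :
    mellin f (1 / 2) = ∫ t in Ioi 0, f t * ((t ^ (-(1 / 2) : ℝ) : ℝ) : ℂ) :=
  setIntegral_congr_fun measurableSet_Ioi fun _ ht ↦ cpow_one_half_sub_one_smul ht

noncomputable def unaryTheta1Term (m : ℕ) (r : ℤ) (τ : ℂ) (ℓ : ℤ) : ℂ :=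
  if (ℓ : ZMod (2 * m)) = (r : ZMod (2 * m)) then
    (ℓ : ℂ) * Complex.exp (2 * Real.pi * Complex.I * τ * (ℓ : ℂ) ^ 2 / (4 * m))
  else 0

noncomputable def falseThetaTerm (m : ℕ) (r : ℤ) (τ : ℂ) (ℓ : ℤ) : ℂ :=
  if (ℓ : ZMod (2 * m)) = (r : ZMod (2 * m)) then
    (Int.sign ℓ : ℂ) * Complex.exp (2 * Real.pi * Complex.I * τ * (ℓ : ℂ) ^ 2 / (4 * m))
  else 0

lemma unaryTheta1Term_zero (m : ℕ) (r : ℤ) (τ : ℂ) : unaryTheta1Term m r τ 0 = 0 := by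
  simp [unaryTheta1Term]

lemma norm_unaryTheta1Term_le (m : ℕ) (r : ℤ) (τ : ℂ) (ℓ : ℤ) :
    ‖unaryTheta1Term m r τ ℓ‖ ≤ ‖(ℓ : ℂ) * jacobiTheta₂_term ℓ 0 (τ / (2 * m))‖ := by
  unfold unaryTheta1Term jacobiTheta₂_term
  split_ifs
  · exact le_of_eq (by ring_nf)
  · simp

lemma norm_falseThetaTerm_le (m : ℕ) (r : ℤ) (τ : ℂ) (ℓ : ℤ) :
    ‖falseThetaTerm m r τ ℓ‖ ≤ ‖unaryTheta1Term m r τ ℓ‖ := by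
  unfold falseThetaTerm unaryTheta1Term
  split_ifs
  · rw [norm_mul, norm_mul]
    gcongr
    rcases eq_or_ne ℓ 0 with rfl | hℓ
    · simp
    rw [norm_intCast, norm_intCast]
    exact_mod_cast (Int.abs_sign_of_ne_zero hℓ).trans_le (Int.one_le_abs hℓ)
  · rfl

lemma summable_norm_unaryTheta1Term {m : ℕ} (hm : 0 < m) (r : ℤ) {τ : ℂ} (hτ : 0 < τ.im) :
    Summable (‖unaryTheta1Term m r τ ·‖) := by
  have him : 0 < (τ / (2 * m)).im := by
    rw [← Nat.cast_ofNat, ← Nat.cast_mul, div_natCast_im]; positivity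
  have h := ((summable_jacobiTheta₂'_term_iff 0 _).2 him).mul_left (2 * Real.pi * I)⁻¹
  refine (summable_norm_iff.2 h).of_nonneg_of_le (fun _ ↦ norm_nonneg _) fun ℓ ↦
    (norm_unaryTheta1Term_le m r τ ℓ).trans_eq ?_
  rw [jacobiTheta₂'_term, ← mul_assoc, ← mul_assoc, inv_mul_cancel₀ (by simp [Real.pi_ne_zero]),
    one_mul]

lemma unaryTheta1Term_eq_zero_or_pi_div_le {m : ℕ} (r : ℤ) (τ : ℂ) (ℓ : ℤ) :
    unaryTheta1Term m r τ ℓ = 0 ∨ Real.pi / (2 * m) ≤ Real.pi * (ℓ / √(2 * m)) ^ 2 := by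
  rcases eq_or_ne ℓ 0 with rfl | hℓ
  · exact .inl (unaryTheta1Term_zero m r τ)
  refine .inr ?_
  rw [div_pow, Real.sq_sqrt (by positivity), mul_div_assoc']
  gcongr
  exact le_mul_of_one_le_right Real.pi_pos.le
    ((one_le_sq_iff_one_le_abs _).2 (by exact_mod_cast Int.one_le_abs hℓ))

lemma unaryTheta1Term_add_I_mul (m : ℕ) (r : ℤ) (τ : ℂ) (ℓ : ℤ) (t : ℝ) :
    unaryTheta1Term m r (τ + I * t) ℓ =
      unaryTheta1Term m r τ ℓ * (Real.exp (-Real.pi * (ℓ / √(2 * m)) ^ 2 * t) : ℂ) := by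
  unfold unaryTheta1Term
  split_ifs
  · rw [mul_assoc (ℓ : ℂ), ofReal_exp, ← Complex.exp_add, div_pow, Real.sq_sqrt (by positivity)]
    congr 2
    push_cast
    linear_combination (2 * Real.pi * t * (ℓ : ℂ) ^ 2 / (4 * m)) * I_sq
  · simp

lemma hasSum_unaryTheta1_add_I_mul {m : ℕ} (hm : 0 < m) (r : ℤ) {τ : ℂ} (hτ : 0 < τ.im)
    {t : ℝ} (ht : 0 ≤ t) :
    HasSum (fun ℓ ↦ unaryTheta1Term m r τ ℓ * (Real.exp (-Real.pi * (ℓ / √(2 * m)) ^ 2 * t) : ℂ))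
      (unaryTheta1 m r (τ + I * t)) := by
  have him : 0 < (τ + I * t).im := by simpa using add_pos_of_pos_of_nonneg hτ ht
  simp_rw [← unaryTheta1Term_add_I_mul]
  exact (summable_norm_unaryTheta1Term hm r him).of_norm.hasSum

lemma unaryTheta1Term_div_abs (m : ℕ) (r : ℤ) (τ : ℂ) (ℓ : ℤ) :
    unaryTheta1Term m r τ ℓ / (|ℓ / √(2 * m)| : ℝ) = √(2 * m) * falseThetaTerm m r τ ℓ := by
  unfold unaryTheta1Term falseThetaTerm
  split_ifs
  · rcases Nat.eq_zero_or_pos m with rfl | hm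
    · simp
    rcases eq_or_ne ℓ 0 with rfl | hℓ
    · simp
    have hsqrt : (0 : ℝ) < √(2 * m) := by positivity
    have habs : ((|ℓ| : ℤ) : ℂ) ≠ 0 := by simpa using hℓ
    have hsign : (ℓ : ℂ) = ℓ.sign * |ℓ| := by exact_mod_cast (Int.sign_mul_abs ℓ).symm
    rw [mul_div_right_comm, abs_div, abs_of_pos hsqrt, ← Int.cast_abs, ofReal_div, ofReal_intCast,
      hsign]
    field_simp
  · simp

lemma mellinConvergent_unaryTheta1 {m : ℕ} (hm : 0 < m) (r : ℤ) {τ : ℂ} (hτ : 0 < τ.im)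
    {s : ℂ} (hs : 0 < s.re) : MellinConvergent (fun t : ℝ ↦ unaryTheta1 m r (τ + I * t)) s :=
  mellinConvergent_of_hasSum_mul_exp_neg (by positivity) (unaryTheta1Term_eq_zero_or_pi_div_le r τ)
    (summable_norm_unaryTheta1Term hm r hτ)
    (fun t ht ↦ by simpa only [neg_mul] using hasSum_unaryTheta1_add_I_mul hm r hτ ht.le) hs

lemma hasSum_mellin_unaryTheta1 {m : ℕ} (hm : 0 < m) (r : ℤ) {τ : ℂ} (hτ : 0 < τ.im) :
    HasSum (fun ℓ ↦ √(2 * m) * falseThetaTerm m r τ ℓ)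
      (mellin (fun t : ℝ ↦ unaryTheta1 m r (τ + I * t)) (1 / 2)) := by
  have h := hasSum_mellin_pi_mul_sq (a := unaryTheta1Term m r τ)
    (r := fun ℓ : ℤ ↦ ℓ / √(2 * m)) (F := fun t : ℝ ↦ unaryTheta1 m r (τ + I * t)) (s := 1)
    (by simp) ?_ ?_
  · simpa only [Gammaℝ_one, one_mul, cpow_one, unaryTheta1Term_div_abs] using h
  · intro t ht
    convert hasSum_unaryTheta1_add_I_mul hm r hτ (le_of_lt ht) using 2 with ℓ
    split_ifs with hℓ
    · have : ℓ = 0 := by simpa [hm.ne'] using hℓ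
      simp [this, unaryTheta1Term_zero]
    · rfl
  · refine ((summable_norm_unaryTheta1Term hm r hτ).mul_left √(2 * m)).of_nonneg_of_le
      (fun _ ↦ by positivity) fun ℓ ↦ ?_
    have hnorm := congrArg norm (unaryTheta1Term_div_abs m r τ ℓ)
    rw [norm_div, norm_real, norm_mul, norm_real, Real.norm_of_nonneg (abs_nonneg _),
      Real.norm_of_nonneg (Real.sqrt_nonneg _)] at hnorm
    rw [one_re, Real.rpow_one, hnorm]
    gcongr
    exact norm_falseThetaTerm_le m r τ ℓ

/-- the false theta function `Ψ_{m,r}` is the Eichler integral of the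
weight 3/2 unary theta function `θ¹_{m,r}`:
`∫_0^∞ θ¹_{m,r}(τ+is) s^{−1/2} ds = √(2m)·Ψ_{m,r}(τ)`. -/
theorem falseTheta_eichler_integral (m : ℕ) (hm : 0 < m) (r : ℤ) (τ : ℂ)
    (hτ : 0 < τ.im) :
    IntegrableOn
      (fun s : ℝ => unaryTheta1 m r (τ + Complex.I * s) * ((s ^ (-(1 / 2) : ℝ) : ℝ) : ℂ))
      (Set.Ioi 0) ∧
    ∫ s in Set.Ioi (0 : ℝ),
        unaryTheta1 m r (τ + Complex.I * s) * ((s ^ (-(1 / 2) : ℝ) : ℝ) : ℂ) =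
      (Real.sqrt (2 * m) : ℂ) * falseTheta m r τ := by
  refine ⟨mellinConvergent_one_half_iff.1 (mellinConvergent_unaryTheta1 hm r hτ (by simp)), ?_⟩
  rw [← mellin_one_half, ← (hasSum_mellin_unaryTheta1 hm r hτ).tsum_eq, tsum_mul_left]
  rfl
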